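/- Fix integers a, b ≥ 0. Define a map φ on columns by: (1) ↦ the block of two length-one columns (1)(1), (2) ↦ (2)(2), (3) ↦ (3)(3), (4) ↦ (4)(4); (1,2) ↦ the block of two length-two columns (1,2)(1,2); (1,3) ↦ (1,3)(1,3); (2,3) ↦ (1,3)(2,4); (2,4) ↦ (2,4)(2,4); (3,4) ↦ (3,4)(3,4); and extend φ to tableaux by applying it column by column (so a tableau with a+b columns is sent to a tableau with 2a+2b columns). Then φ is a bijection from S_C2(a,b) onto LT_C2(a,b), and it is weight-preserving: for every T ∈ S_C2(a,b), writing U = φ(T), one has n_1(U) − n_2(U) + n_3(U) − n_4(U) = 2 (n_1(T) − n_2(T) + n_3(T) − n_4(T)) and n_2(U) − n_3(U) = 2 (n_2(T) − n_3(T)). -/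

import Mathlib

/-- A filling of the shape with `b` columns of length two (each recorded as
(top entry, bottom entry)) followed by `a` columns of length one. -/
abbrev TabT (a b : ℕ) : Type := (Fin b → ℕ × ℕ) × (Fin a → ℕ)

/-- `n_k(T)`: the number of entries of the tableau `T` equal to `k`. -/
def nkOf {m n : ℕ} (T : (Fin m → ℕ × ℕ) × (Fin n → ℕ)) (k : ℕ) : ℕ :=
  (Finset.univ.filter fun j : Fin m => (T.1 j).1 = k).card +
    (Finset.univ.filter fun j : Fin m => (T.1 j).2 = k).card +
    (Finset.univ.filter fun i : Fin n => T.2 i = k).card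

/-- The set of `A2`-semistandard tableaux of shape `(a,b)`: entries from `{1,2,3}`,
rows weakly increasing, columns strictly increasing. -/
def SA2 (a b : ℕ) : Set (TabT a b) :=
  {T | (∀ j : Fin b, 1 ≤ (T.1 j).1 ∧ (T.1 j).1 ≤ 3 ∧ 1 ≤ (T.1 j).2 ∧ (T.1 j).2 ≤ 3 ∧
          (T.1 j).1 < (T.1 j).2) ∧
       (∀ i : Fin a, 1 ≤ T.2 i ∧ T.2 i ≤ 3) ∧
       (∀ j j' : Fin b, j ≤ j' → (T.1 j).1 ≤ (T.1 j').1 ∧ (T.1 j).2 ≤ (T.1 j').2) ∧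
       (∀ i i' : Fin a, i ≤ i' → T.2 i ≤ T.2 i') ∧
       (∀ (j : Fin b) (i : Fin a), (T.1 j).1 ≤ T.2 i)}

/-- The set of `C2`-semistandard tableaux of shape `(a,b)`: entries from `{1,2,3,4}`,
rows weakly increasing, columns strictly increasing, no column equal to `(1,4)`,
and at most one column equal to `(2,3)`. -/
def SC2 (a b : ℕ) : Set (TabT a b) :=
  {T | (∀ j : Fin b, 1 ≤ (T.1 j).1 ∧ (T.1 j).1 ≤ 4 ∧ 1 ≤ (T.1 j).2 ∧ (T.1 j).2 ≤ 4 ∧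
          (T.1 j).1 < (T.1 j).2) ∧
       (∀ i : Fin a, 1 ≤ T.2 i ∧ T.2 i ≤ 4) ∧
       (∀ j j' : Fin b, j ≤ j' → (T.1 j).1 ≤ (T.1 j').1 ∧ (T.1 j).2 ≤ (T.1 j').2) ∧
       (∀ i i' : Fin a, i ≤ i' → T.2 i ≤ T.2 i') ∧
       (∀ (j : Fin b) (i : Fin a), (T.1 j).1 ≤ T.2 i) ∧
       (∀ j : Fin b, T.1 j ≠ (1, 4)) ∧
       (∀ j j' : Fin b, T.1 j = (2, 3) → T.1 j' = (2, 3) → j = j')}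

/-- The restrictions of Figure 4.5 on a pair of adjacent length-two columns of a
`G2`-semistandard tableau. -/
def g2pair2 (c c' : ℕ × ℕ) : Prop :=
  (c = (1, 4) → c' ≠ (1, 4) ∧ c' ≠ (1, 5) ∧ c' ≠ (1, 6) ∧ c' ≠ (1, 7)) ∧
  (c = (1, 5) → c' ≠ (1, 5) ∧ c' ≠ (1, 6) ∧ c' ≠ (1, 7)) ∧
  (c = (1, 6) → c' ≠ (1, 6) ∧ c' ≠ (1, 7) ∧ c' ≠ (2, 6) ∧ c' ≠ (2, 7)) ∧
  (c = (2, 6) → c' ≠ (2, 6) ∧ c' ≠ (2, 7)) ∧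
  (c = (1, 7) → c' ≠ (1, 7) ∧ c' ≠ (2, 7) ∧ c' ≠ (3, 7) ∧ c' ≠ (4, 7)) ∧
  (c = (2, 7) → c' ≠ (2, 7) ∧ c' ≠ (3, 7) ∧ c' ≠ (4, 7)) ∧
  (c = (3, 7) → c' ≠ (3, 7) ∧ c' ≠ (4, 7)) ∧
  (c = (4, 7) → c' ≠ (4, 7))

/-- The restrictions of Figure 4.5 on a length-two column followed by a
length-one column in a `G2`-semistandard tableau. -/
def g2pair1 (c : ℕ × ℕ) (e : ℕ) : Prop :=
  (c = (1, 4) → e ≠ 1) ∧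
  (c = (1, 5) → e ≠ 1) ∧
  (c = (1, 6) → e ≠ 1 ∧ e ≠ 2) ∧
  (c = (2, 6) → e ≠ 2) ∧
  (c = (1, 7) → e ≠ 1 ∧ e ≠ 2 ∧ e ≠ 3 ∧ e ≠ 4) ∧
  (c = (2, 7) → e ≠ 2 ∧ e ≠ 3 ∧ e ≠ 4) ∧
  (c = (3, 7) → e ≠ 3 ∧ e ≠ 4) ∧
  (c = (4, 7) → e ≠ 4)

/-- The set of `G2`-semistandard tableaux of shape `(a,b)`. -/
def SG2 (a b : ℕ) : Set (TabT a b) :=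
  {T | (∀ j : Fin b, 1 ≤ (T.1 j).1 ∧ (T.1 j).1 ≤ 7 ∧ 1 ≤ (T.1 j).2 ∧ (T.1 j).2 ≤ 7 ∧
          (T.1 j).1 < (T.1 j).2) ∧
       (∀ i : Fin a, 1 ≤ T.2 i ∧ T.2 i ≤ 7) ∧
       (∀ j j' : Fin b, j ≤ j' → (T.1 j).1 ≤ (T.1 j').1 ∧ (T.1 j).2 ≤ (T.1 j').2) ∧
       (∀ i i' : Fin a, i ≤ i' → T.2 i ≤ T.2 i') ∧
       (∀ (j : Fin b) (i : Fin a), (T.1 j).1 ≤ T.2 i) ∧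
       (∀ i i' : Fin a, T.2 i = 4 → T.2 i' = 4 → i = i') ∧
       (∀ j : Fin b, T.1 j ≠ (2, 3) ∧ T.1 j ≠ (2, 4) ∧ T.1 j ≠ (3, 4) ∧ T.1 j ≠ (3, 5) ∧
          T.1 j ≠ (4, 5) ∧ T.1 j ≠ (4, 6) ∧ T.1 j ≠ (5, 6)) ∧
       (∀ j j' : Fin b, (j' : ℕ) = (j : ℕ) + 1 → g2pair2 (T.1 j) (T.1 j')) ∧
       (∀ (j : Fin b) (i : Fin a), (j : ℕ) + 1 = b → (i : ℕ) = 0 → g2pair1 (T.1 j) (T.2 i))}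

/-- A filling of the doubled shape: `2b` columns of length two followed by `2a`
columns of length one. -/
abbrev LTabT (a b : ℕ) : Type := (Fin (2 * b) → ℕ × ℕ) × (Fin (2 * a) → ℕ)

/-- The admissible pairs of adjacent length-two columns within a `2`-column block of a
Littelmann `C2`-tableau: `(1,2)(1,2)`, `(1,3)(1,3)`, `(1,3)(2,4)`, `(2,4)(2,4)`,
`(3,4)(3,4)`. -/
def admBlockC2 (c c' : ℕ × ℕ) : Prop :=
  (c = (1, 2) ∧ c' = (1, 2)) ∨ (c = (1, 3) ∧ c' = (1, 3)) ∨ (c = (1, 3) ∧ c' = (2, 4)) ∨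
    (c = (2, 4) ∧ c' = (2, 4)) ∨ (c = (3, 4) ∧ c' = (3, 4))

/-- The set `LT_C2(a,b)` of (transposed, column-grouped) Littelmann tableaux for `C2`:
semistandard fillings of the doubled shape with entries from `{1,2,3,4}` such that each
consecutive block of two columns is admissible. -/
def LTC2 (a b : ℕ) : Set (LTabT a b) :=
  {U | (∀ j : Fin (2 * b), 1 ≤ (U.1 j).1 ∧ (U.1 j).1 ≤ 4 ∧ 1 ≤ (U.1 j).2 ∧
          (U.1 j).2 ≤ 4 ∧ (U.1 j).1 < (U.1 j).2) ∧
       (∀ i : Fin (2 * a), 1 ≤ U.2 i ∧ U.2 i ≤ 4) ∧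
       (∀ j j' : Fin (2 * b), j ≤ j' → (U.1 j).1 ≤ (U.1 j').1 ∧ (U.1 j).2 ≤ (U.1 j').2) ∧
       (∀ i i' : Fin (2 * a), i ≤ i' → U.2 i ≤ U.2 i') ∧
       (∀ (j : Fin (2 * b)) (i : Fin (2 * a)), (U.1 j).1 ≤ U.2 i) ∧
       (∀ i : Fin b,
          admBlockC2 (U.1 ⟨2 * (i : ℕ), by have := i.isLt; omega⟩)
            (U.1 ⟨2 * (i : ℕ) + 1, by have := i.isLt; omega⟩)) ∧
       (∀ i : Fin a,
          U.2 ⟨2 * (i : ℕ), by have := i.isLt; omega⟩ =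
            U.2 ⟨2 * (i : ℕ) + 1, by have := i.isLt; omega⟩)}

/-- The column-by-column doubling map `φ` from `C2`-semistandard tableaux to Littelmann
`C2`-tableaux: each length-one column `(c)` is sent to the block `(c)(c)`; each
length-two column other than `(2,3)` is duplicated, and `(2,3)` is sent to the block
`(1,3)(2,4)`. -/
def phiC2 (a b : ℕ) (T : TabT a b) : LTabT a b :=
  (fun k : Fin (2 * b) =>
    if (k : ℕ) % 2 = 0 then
      (if T.1 ⟨(k : ℕ) / 2, by have := k.isLt; omega⟩ = (2, 3) then (1, 3)
       else T.1 ⟨(k : ℕ) / 2, by have := k.isLt; omega⟩)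
    else
      (if T.1 ⟨(k : ℕ) / 2, by have := k.isLt; omega⟩ = (2, 3) then (2, 4)
       else T.1 ⟨(k : ℕ) / 2, by have := k.isLt; omega⟩),
   fun k : Fin (2 * a) => T.2 ⟨(k : ℕ) / 2, by have := k.isLt; omega⟩)

/-! `φ` acts column by column: on the length-two part it is `interleave ∘ phiCol`, on the
length-one part it doubles every entry. Each condition defining `LT_C2(a,b)` for `φ T` is then
a condition on one column `c` of `T` or on two columns `c` left of `c'`: the block `φ c` is
admissible iff `c` is a column other than `(1,4)`, and the last column of `φ c` is entrywise at
most the first column of `φ c'` iff `c ≤ c'` entrywise and not both are `(2,3)`. Hence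
`φ T ∈ LT_C2(a,b)` iff `T ∈ S_C2(a,b)`, and undoing `phiCol` on admissible blocks inverts `φ`.
For the weights, `(2,3)` and `(1,3)(2,4)` agree up to the factor `2` under every
`S : ℕ → ℤ` with `S 1 + S 4 = S 2 + S 3`, which holds for both statistics. -/

section Interleave

variable {α : Type*} {m : ℕ}

def interleave (g : Fin m → α × α) (k : Fin (2 * m)) : α :=
  if (k : ℕ) % 2 = 0 then (g ⟨k / 2, by have := k.isLt; omega⟩).1
  else (g ⟨k / 2, by have := k.isLt; omega⟩).2

def deinterleave (f : Fin (2 * m) → α) (j : Fin m) : α × α :=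
  (f ⟨2 * j, by have := j.isLt; omega⟩, f ⟨2 * j + 1, by have := j.isLt; omega⟩)

@[simp]
lemma interleave_two_mul (g : Fin m → α × α) (j : Fin m) :
    interleave g ⟨2 * j, by have := j.isLt; omega⟩ = (g j).1 := by
  simp [interleave]

@[simp]
lemma interleave_two_mul_add_one (g : Fin m → α × α) (j : Fin m) :
    interleave g ⟨2 * j + 1, by have := j.isLt; omega⟩ = (g j).2 := by
  simp [interleave, Nat.mul_add_div]

lemma deinterleave_interleave (g : Fin m → α × α) : deinterleave (interleave g) = g :=
  funext fun j => Prod.ext (interleave_two_mul g j) (interleave_two_mul_add_one g j)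

lemma interleave_deinterleave (f : Fin (2 * m) → α) : interleave (deinterleave f) = f := by
  funext k
  unfold interleave deinterleave
  split_ifs <;> refine congrArg f (Fin.ext ?_) <;> dsimp only <;> omega

lemma exists_interleave_eq (g : Fin m → α × α) (k : Fin (2 * m)) :
    ∃ j, interleave g k = (g j).1 ∨ interleave g k = (g j).2 := by
  refine ⟨⟨k / 2, by have := k.isLt; omega⟩, ?_⟩
  unfold interleave
  split_ifs
  exacts [Or.inl rfl, Or.inr rfl]

lemma interleave_injective : Function.Injective (interleave : (Fin m → α × α) → _) :=
  Function.LeftInverse.injective deinterleave_interleave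

lemma forall_interleave_iff {P : α → Prop} {g : Fin m → α × α} :
    (∀ k, P (interleave g k)) ↔ ∀ j, P (g j).1 ∧ P (g j).2 := by
  refine ⟨fun h j => ⟨?_, ?_⟩, fun h k => ?_⟩
  · simpa using h ⟨2 * j, by have := j.isLt; omega⟩
  · simpa using h ⟨2 * j + 1, by have := j.isLt; omega⟩
  · obtain ⟨j, hk | hk⟩ := exists_interleave_eq g k <;> rw [hk]
    exacts [(h j).1, (h j).2]

lemma sum_interleave {M : Type*} [AddCommMonoid M] (f : α → M) (g : Fin m → α × α) :
    ∑ k, f (interleave g k) = ∑ j, (f (g j).1 + f (g j).2) := by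
  rw [← (finProdFinEquiv.trans (finCongr (Nat.mul_comm m 2))).sum_comp, Fintype.sum_prod_type]
  refine Finset.sum_congr rfl fun j _ => ?_
  simp [Fin.sum_univ_two, interleave, Nat.add_mul_div_left, add_comm]

section Order

variable [Preorder α] {g : Fin m → α × α}

lemma interleave_le_snd (hg : ∀ j, (g j).1 ≤ (g j).2) (k : Fin (2 * m)) :
    interleave g k ≤ (g ⟨k / 2, by have := k.isLt; omega⟩).2 := by
  unfold interleave
  split_ifs
  exacts [hg _, le_rfl]

lemma fst_le_interleave (hg : ∀ j, (g j).1 ≤ (g j).2) (k : Fin (2 * m)) :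
    (g ⟨k / 2, by have := k.isLt; omega⟩).1 ≤ interleave g k := by
  unfold interleave
  split_ifs
  exacts [le_rfl, hg _]

lemma monotone_interleave_iff :
    Monotone (interleave g) ↔
      (∀ j, (g j).1 ≤ (g j).2) ∧ ∀ j j', j < j' → (g j).2 ≤ (g j').1 := by
  constructor
  · intro hmono
    refine ⟨fun j => ?_, fun j j' hjj' => ?_⟩
    · have hj := j.isLt
      simpa using @hmono ⟨2 * j, by omega⟩ ⟨2 * j + 1, by omega⟩ (Fin.mk_le_mk.2 (by omega))
    · have hj' := j'.isLt
      have hlt : (j : ℕ) < j' := hjj'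
      simpa using @hmono ⟨2 * j + 1, by omega⟩ ⟨2 * j', by omega⟩ (Fin.mk_le_mk.2 (by omega))
  · rintro ⟨hg, hstep⟩ k k' hkk'
    have hk : (k : ℕ) ≤ k' := hkk'
    rcases (Nat.div_le_div_right (c := 2) hk).lt_or_eq with hlt | heq
    · exact (interleave_le_snd hg k).trans
        ((hstep _ _ (Fin.mk_lt_mk.2 hlt)).trans (fst_le_interleave hg k'))
    · rcases Nat.mod_two_eq_zero_or_one k with heven | hodd
      · calc interleave g k = (g ⟨k / 2, _⟩).1 := if_pos heven
          _ = (g ⟨k' / 2, _⟩).1 := congrArg (fun j => (g j).1) (Fin.ext heq)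
          _ ≤ interleave g k' := fst_le_interleave hg k'
      · exact le_of_eq (congrArg _ (Fin.ext (by omega)))

end Order

end Interleave

def IsC2Column (c : ℕ × ℕ) : Prop :=
  1 ≤ c.1 ∧ c.1 ≤ 4 ∧ 1 ≤ c.2 ∧ c.2 ≤ 4 ∧ c.1 < c.2

def phiCol (c : ℕ × ℕ) : (ℕ × ℕ) × (ℕ × ℕ) :=
  if c = (2, 3) then ((1, 3), (2, 4)) else (c, c)

def psiCol (p : (ℕ × ℕ) × (ℕ × ℕ)) : ℕ × ℕ :=
  if p = ((1, 3), (2, 4)) then (2, 3) else p.1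

lemma psiCol_phiCol (c : ℕ × ℕ) : psiCol (phiCol c) = c := by
  unfold phiCol psiCol
  split_ifs with h h' <;> simp_all [Prod.ext_iff]
  omega

lemma phiCol_psiCol {p : (ℕ × ℕ) × (ℕ × ℕ)} (hp : admBlockC2 p.1 p.2) :
    phiCol (psiCol p) = p := by
  obtain ⟨c, c'⟩ := p
  unfold admBlockC2 at hp
  rcases hp with ⟨rfl, rfl⟩ | ⟨rfl, rfl⟩ | ⟨rfl, rfl⟩ | ⟨rfl, rfl⟩ | ⟨rfl, rfl⟩ <;> decide

lemma admBlockC2_phiCol_iff {c : ℕ × ℕ} :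
    admBlockC2 (phiCol c).1 (phiCol c).2 ↔ IsC2Column c ∧ c ≠ (1, 4) := by
  obtain ⟨x, y⟩ := c
  unfold phiCol admBlockC2 IsC2Column
  split_ifs with h
  · simp only [Prod.mk.injEq] at h
    obtain ⟨rfl, rfl⟩ := h
    decide
  · simp only [Prod.mk.injEq, ne_eq] at h ⊢
    omega

lemma isC2Column_and_le_of_admBlockC2 {c c' : ℕ × ℕ} (h : admBlockC2 c c') :
    IsC2Column c ∧ IsC2Column c' ∧ c ≤ c' := by
  unfold admBlockC2 at h
  rcases h with ⟨rfl, rfl⟩ | ⟨rfl, rfl⟩ | ⟨rfl, rfl⟩ | ⟨rfl, rfl⟩ | ⟨rfl, rfl⟩ <;>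
    norm_num [IsC2Column]

lemma phiCol_snd_le_fst_iff {c c' : ℕ × ℕ} (hc : c.1 < c.2) (hc' : c'.1 < c'.2) :
    (phiCol c).2 ≤ (phiCol c').1 ↔ c ≤ c' ∧ ¬(c = (2, 3) ∧ c' = (2, 3)) := by
  obtain ⟨x, y⟩ := c
  obtain ⟨x', y'⟩ := c'
  unfold phiCol
  split_ifs with h h' h' <;> simp only [Prod.ext_iff, Prod.mk_le_mk] at h h' hc hc' ⊢ <;> omega

lemma phiCol_tops_le_iff {c : ℕ × ℕ} {e : ℕ} :
    (phiCol c).1.1 ≤ e ∧ (phiCol c).2.1 ≤ e ↔ c.1 ≤ e := by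
  unfold phiCol
  split_ifs with h
  · simp only [h]; omega
  · exact and_self_iff

lemma phiCol_weight {S : ℕ → ℤ} (hS : S 1 + S 4 = S 2 + S 3) (c : ℕ × ℕ) :
    S (phiCol c).1.1 + S (phiCol c).1.2 + (S (phiCol c).2.1 + S (phiCol c).2.2) =
      2 * (S c.1 + S c.2) := by
  unfold phiCol
  split_ifs with h
  · simp only [h]; linarith
  · ring

section Tableaux

variable {a b : ℕ}

lemma phiC2_eq (T : TabT a b) :
    phiC2 a b T = (interleave (phiCol ∘ T.1), interleave fun i => (T.2 i, T.2 i)) := by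
  refine Prod.ext (funext fun k => ?_) (funext fun k => ?_) <;>
    simp only [phiC2, interleave, phiCol, Function.comp_apply] <;> split_ifs <;> rfl

lemma phiC2_injective : Function.Injective (phiC2 a b) := by
  intro T T' h
  simp only [phiC2_eq, Prod.mk.injEq] at h
  obtain ⟨hcol, hrow⟩ := h
  refine Prod.ext (funext fun j => ?_) (funext fun i => ?_)
  · simpa only [Function.comp_apply, psiCol_phiCol] using
      congrArg psiCol (congrFun (interleave_injective hcol) j)
  · exact congrArg Prod.fst (congrFun (interleave_injective hrow) i)

lemma phiC2_mem_LTC2 {T : TabT a b} (hT : T ∈ SC2 a b) : phiC2 a b T ∈ LTC2 a b := by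
  obtain ⟨hcol, hrow, hmono, hmono_row, htop, hne, huniq⟩ := hT
  have hadm j : admBlockC2 (phiCol (T.1 j)).1 (phiCol (T.1 j)).2 :=
    admBlockC2_phiCol_iff.2 ⟨hcol j, hne j⟩
  rw [phiC2_eq]
  refine ⟨?_, ?_, ?_, ?_, fun k i => ?_, fun j => ?_, fun i => ?_⟩ <;> dsimp only
  · exact (forall_interleave_iff (P := IsC2Column)).2 fun j =>
      ⟨(isC2Column_and_le_of_admBlockC2 (hadm j)).1, (isC2Column_and_le_of_admBlockC2 (hadm j)).2.1⟩
  · exact (forall_interleave_iff (P := fun e => 1 ≤ e ∧ e ≤ 4)).2 fun i => ⟨hrow i, hrow i⟩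
  · exact monotone_interleave_iff.2 ⟨fun j => (isC2Column_and_le_of_admBlockC2 (hadm j)).2.2,
      fun j j' hjj' => (phiCol_snd_le_fst_iff (hcol j).2.2.2.2 (hcol j').2.2.2.2).2
        ⟨hmono j j' hjj'.le, fun ⟨h, h'⟩ => hjj'.ne (huniq j j' h h')⟩⟩
  · exact monotone_interleave_iff.2 ⟨fun _ => le_rfl, fun i i' hii' => hmono_row i i' hii'.le⟩
  · have key j i := phiCol_tops_le_iff.2 (htop j i)
    obtain ⟨j, hk | hk⟩ := exists_interleave_eq (phiCol ∘ T.1) k <;>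
      obtain ⟨i', hi | hi⟩ := exists_interleave_eq (fun i => (T.2 i, T.2 i)) i <;> rw [hk, hi]
    exacts [(key j i').1, (key j i').1, (key j i').2, (key j i').2]
  · simpa only [interleave_two_mul, interleave_two_mul_add_one, Function.comp_apply] using
      hadm j
  · simp only [interleave_two_mul, interleave_two_mul_add_one]

lemma mem_SC2_of_phiC2_mem_LTC2 {T : TabT a b} (hT : phiC2 a b T ∈ LTC2 a b) :
    T ∈ SC2 a b := by
  rw [phiC2_eq] at hT
  obtain ⟨-, hrow, hmono, hmono_row, htop, hadm, -⟩ := hT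
  dsimp only at hrow htop hadm
  replace hmono : Monotone (interleave (phiCol ∘ T.1)) := hmono
  replace hmono_row : Monotone (interleave fun i => (T.2 i, T.2 i)) := hmono_row
  simp only [interleave_two_mul, interleave_two_mul_add_one, Function.comp_apply] at hadm
  have hcol j := admBlockC2_phiCol_iff.1 (hadm j)
  have hstep j j' (hjj' : j < j') :=
    (phiCol_snd_le_fst_iff (hcol j).1.2.2.2.2 (hcol j').1.2.2.2.2).1
      ((monotone_interleave_iff.1 hmono).2 j j' hjj')
  refine ⟨fun j => (hcol j).1,
    fun i => ((forall_interleave_iff (P := fun e => 1 ≤ e ∧ e ≤ 4)).1 hrow i).1,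
    monotone_iff_forall_lt.2 fun j j' hjj' => (hstep j j' hjj').1,
    monotone_iff_forall_lt.2 (monotone_interleave_iff.1 hmono_row).2, fun j i => ?_,
    fun j => (hcol j).2, fun j j' h h' => ?_⟩
  · refine phiCol_tops_le_iff.1 ⟨?_, ?_⟩
    · simpa using htop ⟨2 * j, by have := j.isLt; omega⟩ ⟨2 * i, by have := i.isLt; omega⟩
    · simpa using htop ⟨2 * j + 1, by have := j.isLt; omega⟩ ⟨2 * i, by have := i.isLt; omega⟩
  · rcases lt_trichotomy j j' with hlt | heq | hgt
    · exact absurd ⟨h, h'⟩ (hstep j j' hlt).2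
    · exact heq
    · exact absurd ⟨h', h⟩ (hstep j' j hgt).2

def psiC2 (U : LTabT a b) : TabT a b :=
  (psiCol ∘ deinterleave U.1, fun i => (deinterleave U.2 i).1)

lemma phiC2_psiC2 {U : LTabT a b} (hU : U ∈ LTC2 a b) : phiC2 a b (psiC2 U) = U := by
  obtain ⟨-, -, -, -, -, hblock, hrow⟩ := hU
  rw [phiC2_eq]
  refine Prod.ext ?_ ?_ <;> dsimp only
  · rw [← interleave_deinterleave U.1]
    exact congrArg interleave (funext fun j => phiCol_psiCol (hblock j))
  · rw [← interleave_deinterleave U.2]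
    exact congrArg interleave (funext fun i => Prod.ext rfl (hrow i))

end Tableaux

section Weight

def weight {m n : ℕ} (V : (Fin m → ℕ × ℕ) × (Fin n → ℕ)) : (ℕ → ℤ) →+ ℤ where
  toFun S := ∑ j, (S (V.1 j).1 + S (V.1 j).2) + ∑ i, S (V.2 i)
  map_zero' := by simp
  map_add' S S' := by simp only [Pi.add_apply, Finset.sum_add_distrib]; ring

lemma natCast_nkOf {m n : ℕ} (V : (Fin m → ℕ × ℕ) × (Fin n → ℕ)) (k : ℕ) :
    (nkOf V k : ℤ) = weight V (Pi.single k 1) := by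
  simp only [nkOf, weight, AddMonoidHom.coe_mk, ZeroHom.coe_mk, Finset.card_filter,
    Pi.single_apply, Nat.cast_add, Nat.cast_sum, Nat.cast_ite, Nat.cast_one, Nat.cast_zero,
    Finset.sum_add_distrib]

lemma weight_phiC2 {a b : ℕ} (T : TabT a b) {S : ℕ → ℤ} (hS : S 1 + S 4 = S 2 + S 3) :
    weight (phiC2 a b T) S = 2 * weight T S := by
  simp only [weight, AddMonoidHom.coe_mk, ZeroHom.coe_mk, phiC2_eq]
  rw [sum_interleave (fun c : ℕ × ℕ => S c.1 + S c.2), sum_interleave S]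
  simp only [Function.comp_apply, phiCol_weight hS, ← two_mul, ← Finset.mul_sum]
  ring

end Weight

/-- The map `φ` is a bijection from `S_C2(a,b)` onto `LT_C2(a,b)`, and it is
weight-preserving: the entry-count statistics of `U = φ(T)` satisfy
`n₁(U) − n₂(U) + n₃(U) − n₄(U) = 2(n₁(T) − n₂(T) + n₃(T) − n₄(T))` and
`n₂(U) − n₃(U) = 2(n₂(T) − n₃(T))`. -/
theorem C2_littelmann_bijection (a b : ℕ) :
    Set.BijOn (phiC2 a b) (SC2 a b) (LTC2 a b) ∧
    ∀ T ∈ SC2 a b,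
      ((nkOf (phiC2 a b T) 1 : ℤ) - (nkOf (phiC2 a b T) 2 : ℤ) +
          (nkOf (phiC2 a b T) 3 : ℤ) - (nkOf (phiC2 a b T) 4 : ℤ) =
        2 * ((nkOf T 1 : ℤ) - (nkOf T 2 : ℤ) + (nkOf T 3 : ℤ) - (nkOf T 4 : ℤ))) ∧
      ((nkOf (phiC2 a b T) 2 : ℤ) - (nkOf (phiC2 a b T) 3 : ℤ) =
        2 * ((nkOf T 2 : ℤ) - (nkOf T 3 : ℤ))) := by
  refine ⟨⟨fun T => phiC2_mem_LTC2, phiC2_injective.injOn, fun U hU => ?_⟩, fun T _ => ?_⟩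
  · exact ⟨psiC2 U, mem_SC2_of_phiC2_mem_LTC2 (by rwa [phiC2_psiC2 hU]), phiC2_psiC2 hU⟩
  · simp only [natCast_nkOf, ← map_sub, ← map_add]
    exact ⟨weight_phiC2 T (by simp), weight_phiC2 T (by simp)⟩
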